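/- Let V, N be real Hilbert spaces and A*((u,λ),(v,μ)) := a(u,v) + b(λ,v) + b(μ,u) − j(λ,μ) a bilinear form on V × N, where a is symmetric, coercive (a(u,u) ≥ α‖u‖²_V) and bounded (|a(u,v)| ≤ C_a‖u‖_V‖v‖_V), j is symmetric positive semidefinite and bounded, b is bounded, and the stability estimate β‖λ‖_N ≤ sup_{v∈V} b(λ,v)/‖v‖_V + j(λ,λ)^{1/2} holds for all λ ∈ N. Then A* satisfies an inf-sup condition: there is γ > 0 such that for all (u,λ), γ(‖u‖_V + ‖λ‖_N) ≤ sup_{(v,μ)} A*((u,λ),(v,μ))/(‖v‖_V + ‖μ‖_N); consequently the linear problem A*((u,λ),(v,μ)) = F(v,μ) has a unique solution for every bounded linear functional F. -/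

import Mathlib

/-!
Inf-sup: given `(u, λ)`, test with `(u + δ‖λ‖ w_λ, -λ)`. The two `b(λ, u)` terms cancel and
`j(λ, λ)` enters with a plus sign, so `A*` is at least
`α‖u‖² - δ‖a‖‖u‖‖λ‖ + δ‖λ‖(β‖λ‖ - j(λ,λ)^{1/2}) + j(λ,λ)`, which Young's inequality bounds
below by a multiple of `(‖u‖ + ‖λ‖)²` for a suitable `δ > 0`; the test pair has norm
`O(‖u‖ + ‖λ‖)`.

Solvability: on the Hilbert space `V × N` with the `L²` norm, `A*` is represented by a
self-adjoint operator `T` which the inf-sup condition bounds below. Hence `T` is injective with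
closed range, and `(range T)ᗮ = ker T = 0`.
-/

open InnerProductSpace

theorem exists_normalized_test_pair {E F : Type*} [NormedAddCommGroup E] [NormedSpace ℝ E]
    [NormedAddCommGroup F] [NormedSpace ℝ F] (f : E × F →L[ℝ] ℝ) {K c n : ℝ} (hK : 0 < K)
    (hn : 0 ≤ n) {v : E} {μ : F} (hvμ : ‖v‖ + ‖μ‖ ≤ K * n) (hf : c * n ^ 2 ≤ f (v, μ)) :
    ∃ (v : E) (μ : F), ‖v‖ + ‖μ‖ ≤ 1 ∧ c / K * n ≤ f (v, μ) := by
  rcases hn.eq_or_lt with rfl | hn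
  · exact ⟨0, 0, by simp, by rw [Prod.mk_zero_zero, map_zero, mul_zero]⟩
  have hKn : 0 < K * n := by positivity
  refine ⟨(K * n)⁻¹ • v, (K * n)⁻¹ • μ, ?_, ?_⟩
  · rw [norm_smul, norm_smul, ← mul_add, norm_inv, Real.norm_of_nonneg hKn.le,
      inv_mul_le_iff₀ hKn, mul_one]
    exact hvμ
  · rw [← Prod.smul_mk, map_smul, smul_eq_mul]
    calc c / K * n = (K * n)⁻¹ * (c * n ^ 2) := by field_simp
      _ ≤ (K * n)⁻¹ * f (v, μ) := by gcongr

/-- Young's inequality on the two cross terms; the relation between `δ` and `β` makes them cost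
exactly half of the `δ β y²` gained. -/
theorem quadratic_lower_bound_of_young {α β C δ x y s p q r : ℝ} (hα : 0 < α) (hδ : 0 ≤ δ)
    (hδβ : δ * (α + 2 * C ^ 2) = 2 * α * β) (hy : 0 ≤ y)
    (hp : α * x ^ 2 ≤ p) (hq : -(C * x) ≤ q) (hr : β * y - s ≤ r) :
    α / 2 * x ^ 2 + δ * β / 2 * y ^ 2 ≤ p + δ * y * q + δ * y * r + s ^ 2 := by
  have hδy : 0 ≤ δ * y := mul_nonneg hδ hy
  have hyoung₁ : 2 * α * (δ * C * x * y) ≤ α ^ 2 * x ^ 2 + δ ^ 2 * C ^ 2 * y ^ 2 := by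
    nlinarith [sq_nonneg (α * x - δ * C * y)]
  have hyoung₂ : 4 * (δ * y * s) ≤ δ ^ 2 * y ^ 2 + 4 * s ^ 2 := by
    nlinarith [sq_nonneg (δ * y - 2 * s)]
  have hδ₂ : δ ^ 2 * (α + 2 * C ^ 2) = 2 * α * β * δ := by rw [sq, mul_assoc, hδβ]; ring
  nlinarith [mul_le_mul_of_nonneg_left hq hδy, mul_le_mul_of_nonneg_left hr hδy]

section SaddleForm

variable {V N : Type*} [NormedAddCommGroup V] [NormedSpace ℝ V]
  [NormedAddCommGroup N] [NormedSpace ℝ N]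
  (a : V →L[ℝ] V →L[ℝ] ℝ) (b : N →L[ℝ] V →L[ℝ] ℝ) (j : N →L[ℝ] N →L[ℝ] ℝ)

noncomputable def saddleForm : V × N →L[ℝ] V × N →L[ℝ] ℝ :=
  a.bilinearComp (.fst ℝ V N) (.fst ℝ V N) + b.bilinearComp (.snd ℝ V N) (.fst ℝ V N)
    + (b.bilinearComp (.snd ℝ V N) (.fst ℝ V N)).flip - j.bilinearComp (.snd ℝ V N) (.snd ℝ V N)

@[simp]
theorem saddleForm_apply (p q : V × N) :
    saddleForm a b j p q = a p.1 q.1 + b p.2 q.1 + b q.2 p.1 - j p.2 q.2 :=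
  rfl

theorem saddleForm_comm (ha : ∀ u v, a u v = a v u) (hj : ∀ lam μ, j lam μ = j μ lam)
    (p q : V × N) : saddleForm a b j p q = saddleForm a b j q p := by
  simp only [saddleForm_apply, ha p.1, hj p.2]
  ring

theorem saddleForm_test_pair (u w : V) (lam : N) (t : ℝ) :
    saddleForm a b j (u, lam) (u + t • w, -lam) = a u u + t * a u w + t * b lam w + j lam lam := by
  simp only [saddleForm_apply, map_add, map_smul, map_neg, smul_eq_mul, neg_apply]
  ring

theorem saddleForm_test_pair_lower_bound {α β δ : ℝ} (hα : 0 < α)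
    (hacoer : ∀ u, α * ‖u‖ ^ 2 ≤ a u u) (hjpsd : ∀ lam, 0 ≤ j lam lam) (hδ : 0 ≤ δ)
    (hδβ : δ * (α + 2 * ‖a‖ ^ 2) = 2 * α * β) {u w : V} {lam : N} (hw : ‖w‖ ≤ 1)
    (hstab : β * ‖lam‖ ≤ b lam w + √(j lam lam)) :
    α / 2 * ‖u‖ ^ 2 + δ * β / 2 * ‖lam‖ ^ 2 ≤
      saddleForm a b j (u, lam) (u + (δ * ‖lam‖) • w, -lam) := by
  have haw : -(‖a‖ * ‖u‖) ≤ a u w := by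
    refine neg_le_of_abs_le ((a.le_opNorm₂ u w).trans ?_)
    exact mul_le_of_le_one_right (by positivity) hw
  rw [saddleForm_test_pair, ← Real.sq_sqrt (hjpsd lam)]
  exact quadratic_lower_bound_of_young hα hδ hδβ (norm_nonneg _) (hacoer u) haw (by linarith)

theorem saddleForm_infSup {α β : ℝ} (hα : 0 < α) (hβ : 0 < β)
    (hacoer : ∀ u, α * ‖u‖ ^ 2 ≤ a u u) (hjpsd : ∀ lam, 0 ≤ j lam lam)
    (hstab : ∀ lam : N, ∃ v : V, ‖v‖ ≤ 1 ∧ β * ‖lam‖ ≤ b lam v + √(j lam lam)) :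
    ∃ γ > 0, ∀ (u : V) (lam : N), ∃ (v : V) (μ : N), ‖v‖ + ‖μ‖ ≤ 1 ∧
      γ * (‖u‖ + ‖lam‖) ≤ saddleForm a b j (u, lam) (v, μ) := by
  set δ := 2 * α * β / (α + 2 * ‖a‖ ^ 2)
  have hδ : 0 < δ := by positivity
  have hδβ : δ * (α + 2 * ‖a‖ ^ 2) = 2 * α * β := div_mul_cancel₀ _ (by positivity)
  set c := min (α / 2) (δ * β / 2)
  have hc : 0 < c := lt_min (by positivity) (by positivity)
  refine ⟨c / 2 / (1 + δ), by positivity, fun u lam => ?_⟩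
  obtain ⟨w, hw, hwlam⟩ := hstab lam
  refine exists_normalized_test_pair _ (by positivity) (by positivity)
    (v := u + (δ * ‖lam‖) • w) (μ := -lam) ?_ ?_
  · calc ‖u + (δ * ‖lam‖) • w‖ + ‖-lam‖ ≤ ‖u‖ + δ * ‖lam‖ * 1 + ‖lam‖ := by
          grw [norm_add_le, norm_smul, norm_neg, Real.norm_of_nonneg (by positivity), hw]
      _ ≤ (1 + δ) * (‖u‖ + ‖lam‖) := by nlinarith [norm_nonneg u, norm_nonneg lam]
  · calc c / 2 * (‖u‖ + ‖lam‖) ^ 2 ≤ c * ‖u‖ ^ 2 + c * ‖lam‖ ^ 2 := by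
          nlinarith [sq_nonneg (‖u‖ - ‖lam‖)]
      _ ≤ α / 2 * ‖u‖ ^ 2 + δ * β / 2 * ‖lam‖ ^ 2 := by
          gcongr
          exacts [min_le_left _ _, min_le_right _ _]
      _ ≤ _ := saddleForm_test_pair_lower_bound a b j hα hacoer hjpsd hδ.le hδβ hw hwlam

end SaddleForm

theorem ContinuousLinearMap.bijective_of_symm_of_infSup {H : Type*} [NormedAddCommGroup H]
    [InnerProductSpace ℝ H] [CompleteSpace H] (B : H →L[ℝ] H →L[ℝ] ℝ)
    (hB : ∀ x y, B x y = B y x) {γ : ℝ} (hγ : 0 < γ) (hinf : ∀ x, γ * ‖x‖ ≤ ‖B x‖) :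
    Function.Bijective B := by
  set T : H →L[ℝ] H := continuousLinearMapOfBilin B
  have hBT : ⇑B = toDual ℝ H ∘ T := by
    ext1 x; exact ((toDual ℝ H).apply_symm_apply (B x)).symm
  have hT_symm : (T : H →ₗ[ℝ] H).IsSymmetric := fun x y => by
    rw [ContinuousLinearMap.coe_coe, continuousLinearMapOfBilin_apply, real_inner_comm,
      continuousLinearMapOfBilin_apply, hB]
  have hT_anti : AntilipschitzWith (Real.toNNReal γ⁻¹) T := by
    refine T.antilipschitz_of_bound fun x => ?_
    rw [Real.coe_toNNReal _ (by positivity), inv_mul_eq_div, le_div_iff₀' hγ]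
    exact (hinf x).trans_eq ((toDual ℝ H).symm.norm_map (B x)).symm
  have hT_range : LinearMap.range (T : H →ₗ[ℝ] H) = ⊤ := by
    have : CompleteSpace (LinearMap.range (T : H →ₗ[ℝ] H)) :=
      (hT_anti.isClosed_range T.uniformContinuous).completeSpace_coe
    rw [← Submodule.orthogonal_eq_bot_iff, hT_symm.orthogonal_range, LinearMap.ker_eq_bot]
    exact hT_anti.injective
  rw [hBT]
  exact (toDual ℝ H).bijective.comp ⟨hT_anti.injective, LinearMap.range_eq_top.mp hT_range⟩

theorem ContinuousLinearMap.bijective_of_bijective_bilinearComp {𝕜 E H : Type*}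
    [NontriviallyNormedField 𝕜] [NormedAddCommGroup E] [NormedSpace 𝕜 E]
    [NormedAddCommGroup H] [NormedSpace 𝕜 H] (S : E →L[𝕜] E →L[𝕜] 𝕜) (e : H ≃L[𝕜] E)
    (h : Function.Bijective (S.bilinearComp (e : H →L[𝕜] E) (e : H →L[𝕜] E))) :
    Function.Bijective S := by
  have hS : ⇑(S.bilinearComp (e : H →L[𝕜] E) (e : H →L[𝕜] E)) =
      e.symm.arrowCongr (ContinuousLinearEquiv.refl 𝕜 𝕜) ∘ S ∘ e := by
    ext x y; simp
  rw [hS, Function.Bijective.of_comp_iff' (ContinuousLinearEquiv.bijective _)] at h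
  exact (Function.Bijective.of_comp_iff S e.bijective).mp h

theorem WithLp.prod_norm_le_add_of_L2 {E F : Type*} [SeminormedAddCommGroup E]
    [SeminormedAddCommGroup F] (x : WithLp 2 (E × F)) : ‖x‖ ≤ ‖x.fst‖ + ‖x.snd‖ := by
  rw [WithLp.prod_norm_eq_of_L2, Real.sqrt_le_iff]
  exact ⟨by positivity, by nlinarith [norm_nonneg x.fst, norm_nonneg x.snd]⟩

theorem ContinuousLinearMap.bijective_of_symm_of_infSup_prod {E F : Type*} [NormedAddCommGroup E]
    [InnerProductSpace ℝ E] [CompleteSpace E] [NormedAddCommGroup F] [InnerProductSpace ℝ F]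
    [CompleteSpace F] (S : E × F →L[ℝ] E × F →L[ℝ] ℝ) (hS : ∀ p q, S p q = S q p) {γ : ℝ}
    (hγ : 0 < γ) (hsup : ∀ (u : E) (lam : F), ∃ (v : E) (μ : F), ‖v‖ + ‖μ‖ ≤ 1 ∧
      γ * (‖u‖ + ‖lam‖) ≤ S (u, lam) (v, μ)) :
    Function.Bijective S := by
  let e : WithLp 2 (E × F) ≃L[ℝ] E × F := WithLp.prodContinuousLinearEquiv 2 ℝ E F
  set B := S.bilinearComp (e : WithLp 2 (E × F) →L[ℝ] E × F) (e : WithLp 2 (E × F) →L[ℝ] E × F)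
  refine S.bijective_of_bijective_bilinearComp e
    (B.bijective_of_symm_of_infSup (fun _ _ => hS _ _) hγ fun x => ?_)
  obtain ⟨v, μ, hvμ, hSx⟩ := hsup x.fst x.snd
  set y : WithLp 2 (E × F) := WithLp.toLp 2 (v, μ)
  have hy : ‖y‖ ≤ 1 := (WithLp.prod_norm_le_add_of_L2 y).trans hvμ
  calc γ * ‖x‖ ≤ γ * (‖x.fst‖ + ‖x.snd‖) := by grw [WithLp.prod_norm_le_add_of_L2 x]
    _ ≤ B x y := hSx
    _ ≤ ‖B x‖ * ‖y‖ := (Real.le_norm_self _).trans ((B x).le_opNorm y)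
    _ ≤ ‖B x‖ := mul_le_of_le_one_right (norm_nonneg _) hy

theorem stmt14_general {V N : Type*}
    [NormedAddCommGroup V] [InnerProductSpace ℝ V] [CompleteSpace V]
    [NormedAddCommGroup N] [InnerProductSpace ℝ N] [CompleteSpace N]
    (a : V →ₗ[ℝ] V →ₗ[ℝ] ℝ) (b : N →ₗ[ℝ] V →ₗ[ℝ] ℝ) (j : N →ₗ[ℝ] N →ₗ[ℝ] ℝ)
    (α Ca Cb Cj β : ℝ) (hα : 0 < α)
    (hβ : 0 < β)
    (hasymm : ∀ u v, a u v = a v u)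
    (hacoer : ∀ u, α * ‖u‖ ^ 2 ≤ a u u)
    (habdd : ∀ u v, |a u v| ≤ Ca * ‖u‖ * ‖v‖)
    (hjsymm : ∀ lam μ, j lam μ = j μ lam)
    (hjpsd : ∀ lam, 0 ≤ j lam lam)
    (hjbdd : ∀ lam μ, |j lam μ| ≤ Cj * ‖lam‖ * ‖μ‖)
    (hbbdd : ∀ lam v, |b lam v| ≤ Cb * ‖lam‖ * ‖v‖)
    (hstab : ∀ lam : N, ∃ v : V, ‖v‖ ≤ 1 ∧
      β * ‖lam‖ ≤ b lam v + Real.sqrt (j lam lam)) :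
    (∃ γ > 0, ∀ (u : V) (lam : N), ∃ (v : V) (μ : N), ‖v‖ + ‖μ‖ ≤ 1 ∧
      γ * (‖u‖ + ‖lam‖) ≤ a u v + b lam v + b μ u - j lam μ) ∧
    (∀ F : V × N →L[ℝ] ℝ, ∃! p : V × N, ∀ (v : V) (μ : N),
      a p.1 v + b p.2 v + b μ p.1 - j p.2 μ = F (v, μ)) := by
  let aC := a.mkContinuous₂ Ca habdd
  let bC := b.mkContinuous₂ Cb hbbdd
  let jC := j.mkContinuous₂ Cj hjbdd
  obtain ⟨γ, hγ, hsup⟩ := saddleForm_infSup aC bC jC hα hβ hacoer hjpsd hstab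
  have hS : Function.Bijective (saddleForm aC bC jC) :=
    (saddleForm aC bC jC).bijective_of_symm_of_infSup_prod
      (saddleForm_comm aC bC jC hasymm hjsymm) hγ hsup
  refine ⟨⟨γ, hγ, hsup⟩, fun F => (existsUnique_congr fun p => ?_).mp (hS.existsUnique F)⟩
  rw [ContinuousLinearMap.ext_iff, Prod.forall]
  rfl

/-- abstract Lemma 4.7 and its corollary: with
`A*((u,λ),(v,μ)) = a(u,v) + b(λ,v) + b(μ,u) − j(λ,μ)`, `a` symmetric coercive bounded,
`j` symmetric positive semidefinite bounded, `b` bounded, and the stability estimate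
`β‖λ‖ ≤ sup_v b(λ,v)/‖v‖ + j(λ,λ)^{1/2}` (expressed via unit-ball test elements), the form
`A*` satisfies an inf-sup condition and the problem `A*((u,λ),·) = F` is uniquely solvable
for every bounded linear functional `F`. -/
theorem stmt14 {V N : Type*}
    [NormedAddCommGroup V] [InnerProductSpace ℝ V] [CompleteSpace V]
    [NormedAddCommGroup N] [InnerProductSpace ℝ N] [CompleteSpace N]
    (a : V →ₗ[ℝ] V →ₗ[ℝ] ℝ) (b : N →ₗ[ℝ] V →ₗ[ℝ] ℝ) (j : N →ₗ[ℝ] N →ₗ[ℝ] ℝ)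
    (α Ca Cb Cj β : ℝ) (hα : 0 < α) (hCa : 0 < Ca) (hCb : 0 < Cb) (hCj : 0 < Cj)
    (hβ : 0 < β)
    (hasymm : ∀ u v, a u v = a v u)
    (hacoer : ∀ u, α * ‖u‖ ^ 2 ≤ a u u)
    (habdd : ∀ u v, |a u v| ≤ Ca * ‖u‖ * ‖v‖)
    (hjsymm : ∀ lam μ, j lam μ = j μ lam)
    (hjpsd : ∀ lam, 0 ≤ j lam lam)
    (hjbdd : ∀ lam μ, |j lam μ| ≤ Cj * ‖lam‖ * ‖μ‖)
    (hbbdd : ∀ lam v, |b lam v| ≤ Cb * ‖lam‖ * ‖v‖)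
    (hstab : ∀ lam : N, ∃ v : V, ‖v‖ ≤ 1 ∧
      β * ‖lam‖ ≤ b lam v + Real.sqrt (j lam lam)) :
    (∃ γ > 0, ∀ (u : V) (lam : N), ∃ (v : V) (μ : N), ‖v‖ + ‖μ‖ ≤ 1 ∧
      γ * (‖u‖ + ‖lam‖) ≤ a u v + b lam v + b μ u - j lam μ) ∧
    (∀ F : V × N →L[ℝ] ℝ, ∃! p : V × N, ∀ (v : V) (μ : N),
      a p.1 v + b p.2 v + b μ p.1 - j p.2 μ = F (v, μ)) :=
  stmt14_general a b j α Ca Cb Cj β hα hβ hasymm hacoer habdd hjsymm hjpsd hjbdd hbbdd hstab
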